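/- Let N ≥ 1 be an integer, M > N an integer, and 0 < P_n < P_s reals. Set ζ = (P_n − P_s)/(P_s P_n). Let X ~ Gamma(N, P_s) and Y ~ Gamma(M−N, P_n) be independent. Then for every real c > 0, setting τ_1 = P_s^{−1} + c and τ_2 = P_n^{−1} + c, E[ e^{-c(X+Y)} ] = Σ_{n=0}^{N-1} [ C(M−N+n−1, n) · P_s^{M−2N} / ( ζ^n (P_s − P_n)^{M−N} ) ] · [ 1/τ_1^{N−n} − Σ_{m=0}^{M−N+n−1} C(N−n−1+m, m) (−ζ)^m / τ_2^{N−n+m} ]. -/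

import Mathlib

/-!
By independence the Laplace transform factorises, and with the rates `P_s⁻¹`, `P_n⁻¹` of the two
Gamma laws it equals `(P_s⁻¹ / τ₁) ^ N * (P_n⁻¹ / τ₂) ^ (M - N)`. Up to the factor
`P_s⁻¹ ^ N * P_n⁻¹ ^ (M - N)`, the right-hand side is a partial fraction expansion of
`1 / (τ₁ ^ N * τ₂ ^ (M - N))`: each bracket is the remainder of the Taylor
expansion of `τ₁ ^ (-(N - n))` about `τ₂`, and writing that remainder through the complementary
negative-binomial tails turns the whole sum into a double sum that an alternating binomial sum
collapses to its constant term.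
-/

open MeasureTheory ProbabilityTheory Real Finset

theorem integral_gammaPDFReal_eq_one {a r : ℝ} (ha : 0 < a) (hr : 0 < r) :
    ∫ x, gammaPDFReal a r x = 1 := by
  rw [integral_eq_lintegral_of_nonneg_ae (ae_of_all _ (gammaPDFReal_nonneg ha hr))
    (measurable_gammaPDFReal a r).aestronglyMeasurable]
  change (∫⁻ x, gammaPDF a r x).toReal = 1
  simp [lintegral_gammaPDF_eq_one ha hr]

theorem gammaPDFReal_mul_exp {a r t : ℝ} (hr : 0 < r) (ht : t < r) (x : ℝ) :
    gammaPDFReal a r x * exp (t * x) = (r / (r - t)) ^ a * gammaPDFReal a (r - t) x := by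
  have hrt : 0 < r - t := sub_pos.2 ht
  unfold gammaPDFReal
  split_ifs
  · rw [div_rpow hr.le hrt.le, show -((r - t) * x) = -(r * x) + t * x by ring, exp_add]
    field_simp
  · simp

theorem mgf_id_gammaMeasure {a r t : ℝ} (ha : 0 < a) (hr : 0 < r) (ht : t < r) :
    mgf id (gammaMeasure a r) t = (r / (r - t)) ^ a := by
  rw [mgf, gammaMeasure, integral_withDensity_eq_integral_toReal_smul
    (show Measurable (gammaPDF a r) from (measurable_gammaPDFReal a r).ennreal_ofReal)
    (ae_of_all _ fun _ ↦ ENNReal.ofReal_lt_top)]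
  simp only [gammaPDF, ENNReal.toReal_ofReal (gammaPDFReal_nonneg ha hr _), smul_eq_mul, id,
    gammaPDFReal_mul_exp hr ht, integral_const_mul,
    integral_gammaPDFReal_eq_one ha (sub_pos.2 ht), mul_one]

theorem mgf_add_of_gammaMeasure {Ω : Type*} [MeasurableSpace Ω] {P : Measure Ω}
    {X Y : Ω → ℝ} (hX : Measurable X) (hY : Measurable Y) (hXY : IndepFun X Y P)
    {a r b s t : ℝ} (ha : 0 < a) (hr : 0 < r) (hb : 0 < b) (hs : 0 < s) (htr : t < r) (hts : t < s)
    (hXlaw : P.map X = gammaMeasure a r) (hYlaw : P.map Y = gammaMeasure b s) :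
    mgf (X + Y) P t = (r / (r - t)) ^ a * (s / (s - t)) ^ b := by
  rw [hXY.mgf_add' hX.aestronglyMeasurable hY.aestronglyMeasurable, ← mgf_id_map hX.aemeasurable,
    ← mgf_id_map hY.aemeasurable, hXlaw, hYlaw, mgf_id_gammaMeasure ha hr htr,
    mgf_id_gammaMeasure hb hs hts]

-- With success probability `y`, the two terms are the probabilities that the `(j + 1)`-st success
-- comes before the `(L + 1)`-st failure, and the other way round.
theorem pow_mul_sum_choose_add_pow_mul_sum_choose_eq_one {R : Type*} [CommRing R] {x y : R}
    (hxy : x + y = 1) (j L : ℕ) :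
    y ^ (j + 1) * ∑ m ∈ range (L + 1), ((j + m).choose m : R) * x ^ m
      + x ^ (L + 1) * ∑ i ∈ range (j + 1), ((L + i).choose i : R) * y ^ i = 1 := by
  obtain rfl : y = 1 - x := eq_sub_of_add_eq' hxy
  induction L with
  | zero =>
    simp only [zero_add, sum_range_one, Nat.choose_zero_right, Nat.choose_self, Nat.cast_one,
      pow_zero, mul_one, one_mul, pow_one]
    linear_combination -geom_sum_mul (1 - x) (j + 1)
  | succ L ih =>
    have pascal (i : ℕ) : ((L + i).choose i : R) * (1 - x) ^ i
        - x * (((L + 1 + i).choose i : R) * (1 - x) ^ i)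
        = ((L + (i + 1)).choose (L + 1) : R) * (1 - x) ^ (i + 1)
          - ((L + i).choose (L + 1) : R) * (1 - x) ^ i := by
      have h1 : (L + i).choose i = (L + i).choose L := Nat.choose_symm_add.symm
      have h2 : (L + 1 + i).choose i = (L + i).choose L + (L + i).choose (L + 1) := by
        rw [← Nat.choose_symm_add, add_right_comm, Nat.choose_succ_succ']
      rw [h1, h2, ← add_assoc, Nat.choose_succ_succ']
      push_cast
      ring
    have telescope : ∑ i ∈ range (j + 1), ((L + i).choose i : R) * (1 - x) ^ i
        - x * ∑ i ∈ range (j + 1), ((L + 1 + i).choose i : R) * (1 - x) ^ i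
        = ((L + (j + 1)).choose (L + 1) : R) * (1 - x) ^ (j + 1) := by
      rw [mul_sum, ← sum_sub_distrib, sum_congr rfl fun i _ ↦ pascal i,
        sum_range_sub (fun i ↦ ((L + i).choose (L + 1) : R) * (1 - x) ^ i)]
      simp
    rw [sum_range_succ, show j + (L + 1) = L + (j + 1) by omega]
    linear_combination ih - x ^ (L + 1) * telescope

theorem alternating_sum_choose_mul_choose (K p : ℕ) :
    ∑ n ∈ range (p + 1), ((-1) ^ n * (K + n).choose n * (K + p).choose (p - n) : ℤ)
      = if p = 0 then 1 else 0 := by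
  have factor : ∀ n ∈ range (p + 1),
      ((-1) ^ n * (K + n).choose n * (K + p).choose (p - n) : ℤ)
        = (K + p).choose p * ((-1) ^ n * p.choose n) := by
    intro n hn
    have hnp : n ≤ p := Nat.lt_succ_iff.1 (mem_range.1 hn)
    have h := Nat.choose_mul (n := K + p) (k := p) (s := p - n) (Nat.sub_le p n)
    rw [Nat.choose_symm hnp, show K + p - (p - n) = K + n by omega,
      show p - (p - n) = n by omega] at h
    rw [mul_left_comm, mul_assoc, ← Nat.cast_mul, ← Nat.cast_mul, h]
    push_cast
    ring
  rw [sum_congr rfl factor, ← mul_sum, Int.alternating_sum_range_choose]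
  split_ifs with hp <;> simp [hp]

theorem sum_range_sum_range_sub_alternating_choose {R : Type*} [CommRing R] (K : ℕ) {N : ℕ}
    (hN : 0 < N) (x : R) :
    ∑ n ∈ range N, ∑ i ∈ range (N - n),
      (-1) ^ n * ((K + n).choose n : R) * ((K + n + i).choose i : R) * x ^ (n + i) = 1 := by
  rw [← sum_range_diag_flip]
  have inner (p : ℕ) : ∑ n ∈ range (p + 1),
      (-1) ^ n * ((K + n).choose n : R) * ((K + n + (p - n)).choose (p - n) : R) * x ^ (n + (p - n))
      = if p = 0 then 1 else 0 := by
    have h := congrArg (Int.cast (R := R)) (alternating_sum_choose_mul_choose K p)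
    push_cast at h
    have hnp : ∀ n ∈ range (p + 1), n + (p - n) = p := fun n hn ↦
      Nat.add_sub_cancel' (Nat.lt_succ_iff.1 (mem_range.1 hn))
    rw [sum_congr rfl fun n hn ↦ by rw [add_assoc, hnp n hn], ← sum_mul, h]
    split_ifs with hp <;> simp [hp]
  simp only [inner, sum_ite_eq', mem_range, hN, if_true]

theorem one_div_pow_sub_sum_choose_eq {𝕜 : Type*} [Field 𝕜] {a b : 𝕜} (ha : a ≠ 0) (hb : b ≠ 0)
    (j L : ℕ) :
    1 / a ^ (j + 1) - ∑ m ∈ range (L + 1), ((j + m).choose m : 𝕜) * (b - a) ^ m / b ^ (j + 1 + m)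
      = ((b - a) / b) ^ (L + 1) / a ^ (j + 1) *
          ∑ i ∈ range (j + 1), ((L + i).choose i : 𝕜) * (a / b) ^ i := by
  have h := pow_mul_sum_choose_add_pow_mul_sum_choose_eq_one
    (x := (b - a) / b) (y := a / b) (by field_simp; ring) j L
  have hS : ∑ m ∈ range (L + 1), ((j + m).choose m : 𝕜) * (b - a) ^ m / b ^ (j + 1 + m)
      = (a / b) ^ (j + 1) * (∑ m ∈ range (L + 1), ((j + m).choose m : 𝕜) * ((b - a) / b) ^ m)
        / a ^ (j + 1) := by
    rw [mul_sum, sum_div]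
    refine sum_congr rfl fun m _ ↦ ?_
    rw [div_pow, div_pow, pow_add]
    field_simp
  rw [hS, ← h]
  field_simp
  ring

theorem one_div_pow_mul_pow_eq_sum_range {𝕜 : Type*} [Field 𝕜] {a b : 𝕜} (ha : a ≠ 0) (hb : b ≠ 0)
    (hab : a ≠ b) {N : ℕ} (hN : 0 < N) (K : ℕ) :
    1 / (a ^ N * b ^ (K + 1)) = ∑ n ∈ range N,
      ((K + n).choose n : 𝕜) / ((a - b) ^ n * (b - a) ^ (K + 1)) *
        (1 / a ^ (N - n) - ∑ m ∈ range (K + n + 1),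
          ((N - n - 1 + m).choose m : 𝕜) * (b - a) ^ m / b ^ (N - n + m)) := by
  have hba : b - a ≠ 0 := sub_ne_zero.2 hab.symm
  trans 1 / (a ^ N * b ^ (K + 1)) * ∑ n ∈ range N, ∑ i ∈ range (N - n),
      (-1) ^ n * ((K + n).choose n : 𝕜) * ((K + n + i).choose i : 𝕜) * (a / b) ^ (n + i)
  · rw [sum_range_sum_range_sub_alternating_choose K hN, mul_one]
  rw [mul_sum]
  refine sum_congr rfl fun n hn ↦ ?_
  obtain ⟨j, hj⟩ : ∃ j, N - n = j + 1 := ⟨N - n - 1, by have := mem_range.1 hn; omega⟩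
  obtain rfl : N = n + j + 1 := by have := mem_range.1 hn; omega
  simp only [hj, Nat.add_sub_cancel]
  have hsign : (a - b) ^ n = (b - a) ^ n / (-1) ^ n := by
    rw [eq_div_iff (by simp), ← mul_pow, mul_neg_one, neg_sub]
  rw [one_div_pow_sub_sum_choose_eq ha hb j (K + n), hsign, mul_sum, mul_sum, mul_sum]
  refine sum_congr rfl fun i _ ↦ ?_
  simp only [div_pow]
  field_simp
  ring

theorem laplace_sum_gamma_Pn_lt_Ps_general
    {Ω : Type*} [MeasurableSpace Ω] (P : Measure Ω)
    (N M : ℕ) (hN : 1 ≤ N) (hM : N < M)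
    (Ps Pn : ℝ) (hPn : 0 < Pn) (hPnPs : Pn < Ps)
    (ζ : ℝ) (hζ : ζ = (Pn - Ps) / (Ps * Pn))
    (X Y : Ω → ℝ) (hX : Measurable X) (hY : Measurable Y)
    (hIndep : IndepFun X Y P)
    (hXlaw : P.map X = gammaMeasure (N : ℝ) Ps⁻¹)
    (hYlaw : P.map Y = gammaMeasure ((M : ℝ) - N) Pn⁻¹)
    (c : ℝ) (hc : 0 < c)
    (τ₁ τ₂ : ℝ) (hτ₁ : τ₁ = Ps⁻¹ + c) (hτ₂ : τ₂ = Pn⁻¹ + c) :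
    ∫ ω, Real.exp (-(c * (X ω + Y ω))) ∂P =
      ∑ n ∈ Finset.range N,
        (((M - N + n - 1).choose n : ℝ) * Ps ^ ((M : ℤ) - 2 * N) /
            (ζ ^ n * (Ps - Pn) ^ (M - N))) *
          (1 / τ₁ ^ (N - n) -
            ∑ m ∈ Finset.range (M - N + n),
              ((N - n - 1 + m).choose m : ℝ) * (-ζ) ^ m / τ₂ ^ (N - n + m)) := by
  have hPs : 0 < Ps := hPn.trans hPnPs
  obtain ⟨K, rfl⟩ : ∃ K, M = N + K + 1 := ⟨M - N - 1, by omega⟩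
  have hτ₁pos : 0 < τ₁ := by rw [hτ₁]; positivity
  have hτ₁₂ : τ₁ < τ₂ := by rw [hτ₁, hτ₂]; gcongr
  have hLHS : ∫ ω, exp (-(c * (X ω + Y ω))) ∂P
      = Ps⁻¹ ^ N * Pn⁻¹ ^ (K + 1) * (1 / (τ₁ ^ N * τ₂ ^ (K + 1))) := by
    rw [show ((N + K + 1 : ℕ) : ℝ) - N = (K + 1 : ℕ) by push_cast; ring] at hYlaw
    have h := mgf_add_of_gammaMeasure hX hY hIndep (t := -c) (Nat.cast_pos.2 hN) (inv_pos.2 hPs)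
      (Nat.cast_pos.2 K.succ_pos) (inv_pos.2 hPn) (by linarith [inv_pos.2 hPs])
      (by linarith [inv_pos.2 hPn]) hXlaw hYlaw
    simp only [mgf, Pi.add_apply, neg_mul, rpow_natCast, sub_neg_eq_add, ← hτ₁, ← hτ₂] at h
    rw [h, div_pow, div_pow, div_mul_div_comm, div_eq_mul_one_div]
  have hζτ : ζ = τ₁ - τ₂ := by rw [hζ, hτ₁, hτ₂]; field_simp; ring
  have hPsPn : Ps - Pn = (τ₂ - τ₁) * Ps * Pn := by rw [hτ₁, hτ₂]; field_simp; ring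
  have hPsz : Ps ^ (((N + K + 1 : ℕ) : ℤ) - 2 * N) = Ps ^ (K + 1) / Ps ^ N := by
    rw [show ((N + K + 1 : ℕ) : ℤ) - 2 * N = (K + 1 : ℕ) - (N : ℤ) by push_cast; ring,
      zpow_sub₀ hPs.ne', zpow_natCast, zpow_natCast]
  rw [hLHS, one_div_pow_mul_pow_eq_sum_range hτ₁pos.ne' (hτ₁pos.trans hτ₁₂).ne' hτ₁₂.ne hN K,
    mul_sum]
  refine sum_congr rfl fun n _ ↦ ?_
  rw [show N + K + 1 - N = K + 1 by omega, show K + 1 + n - 1 = K + n by omega,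
    show K + 1 + n = K + n + 1 by omega, hζτ, neg_sub, hPsz, hPsPn, ← mul_assoc]
  congr 1
  have : τ₁ - τ₂ ≠ 0 := sub_ne_zero.2 hτ₁₂.ne
  have : τ₂ - τ₁ ≠ 0 := sub_ne_zero.2 hτ₁₂.ne'
  rw [inv_pow, inv_pow, mul_pow, mul_pow]
  field_simp

/-- Lemma 2 of the paper, case `N/M < φ < 1` (i.e. `P_n < P_s`): Laplace transform
`E[e^(-c(X+Y))]` of the sum of the independent signal gain `X ~ Gamma(N, P_s)` and
AN gain `Y ~ Gamma(M-N, P_n)` (shape/scale convention, i.e. rates `P_s⁻¹`, `P_n⁻¹`). -/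
theorem laplace_sum_gamma_Pn_lt_Ps
    {Ω : Type*} [MeasurableSpace Ω] (P : Measure Ω) [IsProbabilityMeasure P]
    (N M : ℕ) (hN : 1 ≤ N) (hM : N < M)
    (Ps Pn : ℝ) (hPn : 0 < Pn) (hPnPs : Pn < Ps)
    (ζ : ℝ) (hζ : ζ = (Pn - Ps) / (Ps * Pn))
    (X Y : Ω → ℝ) (hX : Measurable X) (hY : Measurable Y)
    (hIndep : IndepFun X Y P)
    (hXlaw : P.map X = gammaMeasure (N : ℝ) Ps⁻¹)
    (hYlaw : P.map Y = gammaMeasure ((M : ℝ) - N) Pn⁻¹)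
    (c : ℝ) (hc : 0 < c)
    (τ₁ τ₂ : ℝ) (hτ₁ : τ₁ = Ps⁻¹ + c) (hτ₂ : τ₂ = Pn⁻¹ + c) :
    ∫ ω, Real.exp (-(c * (X ω + Y ω))) ∂P =
      ∑ n ∈ Finset.range N,
        (((M - N + n - 1).choose n : ℝ) * Ps ^ ((M : ℤ) - 2 * N) /
            (ζ ^ n * (Ps - Pn) ^ (M - N))) *
          (1 / τ₁ ^ (N - n) -
            ∑ m ∈ Finset.range (M - N + n),
              ((N - n - 1 + m).choose m : ℝ) * (-ζ) ^ m / τ₂ ^ (N - n + m)) :=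
  laplace_sum_gamma_Pn_lt_Ps_general P N M hN hM Ps Pn hPn hPnPs ζ hζ X Y hX hY hIndep hXlaw hYlaw c
    hc τ₁ τ₂ hτ₁ hτ₂
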